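/- Pathing through strong field assignment: assume ρ,h,A ⊨ (Γ,Δ,Θ), ρ(x) = l_x ∈ A, Γ(x) = n_x ∈ Θ, ρ(y) = l_y, Γ(y) = t_y. If for some path π, value v, and basetype t we have ⟨ρ, h[(l_x,f) ↦ l_y]⟩π ⇓ v and [Γ, Δ[(n_x,f) ↦ t_y]]π ⇓ t, then at least one of the following holds: (1) ⟨ρ,h⟩π ⇓ v and [Γ,Δ]π ⇓ t; (2) there exists a path suffix π' with ⟨ρ,h⟩y.π' ⇓ v and [Γ,Δ]y.π' ⇓ t; (3) t = ⊤; (4) v = null. -/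

import Mathlib

namespace SecureClones

abbrev Var := ℕ
abbrev Field := ℕ
abbrev Loc := ℕ
abbrev PolId := ℕ
abbrev Node := ℕ

/-- Values: locations or null. -/
inductive Val where
  | loc : Loc → Val
  | null : Val
deriving DecidableEq

abbrev Obj := Field → Val
abbrev Heap := Loc → Option Obj
abbrev Env := Var → Val

/-- An access path: a root variable followed by a sequence of fields. -/
structure Path where
  root : Var
  fields : List Field
deriving DecidableEq

/-- Evaluation of a sequence of field dereferences from a value. -/
def evalFields (h : Heap) : Val → List Field → Option Val
  | v, [] => some v
  | Val.loc l, f :: fs =>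
      match h l with
      | some o => evalFields h (o f) fs
      | none => none
  | Val.null, _ :: _ => none

/-- Concrete path evaluation ⟨ρ,h⟩π ⇓ v. -/
def EvalPath (ρ : Env) (h : Heap) (π : Path) (v : Val) : Prop :=
  evalFields h (ρ π.root) π.fields = some v

/-- Reachability in a heap: `Reach h v w` iff `w` is reachable from `v`
by a (possibly empty) sequence of field dereferences. -/
inductive Reach (h : Heap) : Val → Val → Prop
  | refl (v) : Reach h v v
  | step {v : Val} {l : Loc} {o : Obj} (f : Field) :
      Reach h v (Val.loc l) → h l = some o → Reach h v (o f)

/-- A copy policy: a set of (policy identifier, deep field) pairs. -/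
abbrev Pol := Set (PolId × Field)

/-- A field sequence follows only deep fields of a policy (w.r.t. policy map `Pm`). -/
inductive FieldsSat (Pm : PolId → Pol) : Pol → List Field → Prop
  | nil (τ) : FieldsSat Pm τ []
  | cons {τ : Pol} {fs : List Field} (X : PolId) (f : Field) :
      (X, f) ∈ τ → FieldsSat Pm (Pm X) fs → FieldsSat Pm τ (f :: fs)

/-- ⊢ π : τ : the access path follows only deep fields of τ. -/
def PathSat (Pm : PolId → Pol) (π : Path) (τ : Pol) : Prop :=
  FieldsSat Pm τ π.fields

/-- Policy semantics ρ,h,x ⊨ τ. -/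
def PolSem (Pm : PolId → Pol) (ρ : Env) (h : Heap) (x : Var) (τ : Pol) : Prop :=
  ∀ (π π' : Path) (l l' : Loc),
    π.root = x → π'.root ≠ x →
    PathSat Pm π τ →
    EvalPath ρ h π (Val.loc l) → EvalPath ρ h π' (Val.loc l') →
    l ≠ l'

/-- Base types of the type-and-effect system. -/
inductive BaseType where
  | node : Node → BaseType
  | bot
  | topOut
  | top
deriving DecidableEq

abbrev Graph := Node → Option (Field → BaseType)

/-- A type (Γ,Δ,Θ). -/
structure Ty where
  Γ : Var → BaseType
  Δ : Graph
  Θ : Set Node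

/-- Abstract evaluation of a field sequence from a base type, with ⊤, ⊤out as sinks. -/
def aevalFields (Δ : Graph) : BaseType → List Field → Option BaseType
  | t, [] => some t
  | BaseType.node n, f :: fs =>
      match Δ n with
      | some e => aevalFields Δ (e f) fs
      | none => none
  | BaseType.top, _ :: _ => some BaseType.top
  | BaseType.topOut, _ :: _ => some BaseType.topOut
  | BaseType.bot, _ :: _ => none

/-- Abstract path evaluation [Γ,Δ]π ⇓ t. -/
def AEval (Γ : Var → BaseType) (Δ : Graph) (π : Path) (t : BaseType) : Prop :=
  aevalFields Δ (Γ π.root) π.fields = some t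

/-- Auxiliary type interpretation [[v : t]]. -/
inductive AuxInterp (ρ : Env) (h : Heap) (A : Set Loc) (Γ : Var → BaseType) (Δ : Graph) :
    Val → BaseType → Prop
  | null (t) : AuxInterp ρ h A Γ Δ Val.null t
  | top (v) : AuxInterp ρ h A Γ Δ v BaseType.top
  | topOut (l : Loc) :
      (∀ l' : Loc, Reach h (Val.loc l) (Val.loc l') → l' ∉ A) →
      AuxInterp ρ h A Γ Δ (Val.loc l) BaseType.topOut
  | node (l : Loc) (n : Node) :
      l ∈ A → (Δ n).isSome →
      (∀ π, EvalPath ρ h π (Val.loc l) → AEval Γ Δ π (BaseType.node n)) →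
      AuxInterp ρ h A Γ Δ (Val.loc l) (BaseType.node n)

/-- Main type interpretation ρ,h,A ⊨ (Γ,Δ,Θ). -/
structure Interp (ρ : Env) (h : Heap) (A : Set Loc) (T : Ty) : Prop where
  paths : ∀ (π : Path) (t : BaseType) (v : Val),
    AEval T.Γ T.Δ π t → EvalPath ρ h π v → AuxInterp ρ h A T.Γ T.Δ v t
  strong : ∀ n ∈ T.Θ, ∀ (π π' : Path) (l l' : Loc),
    AEval T.Γ T.Δ π (BaseType.node n) → AEval T.Γ T.Δ π' (BaseType.node n) →
    EvalPath ρ h π (Val.loc l) → EvalPath ρ h π' (Val.loc l') → l = l'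

/-- Value sub-typing t ≤_σ t' (σ : Node → Option Node, none standing for ⊤). -/
inductive VSub (σ : Node → Option Node) : BaseType → BaseType → Prop
  | bot (t) : VSub σ BaseType.bot t
  | top {t : BaseType} : (∀ n, t ≠ BaseType.node n) → VSub σ t BaseType.top
  | topOut : VSub σ BaseType.topOut BaseType.topOut
  | node {n n' : Node} : σ n = some n' → VSub σ (BaseType.node n) (BaseType.node n')
  | nodeTop {n : Node} : σ n = none → VSub σ (BaseType.node n) BaseType.top

/-- T₁ ⊑ T₂ via the fusion map σ. -/
structure SubtypeVia (T₁ T₂ : Ty) (σ : Node → Option Node) : Prop where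
  st1 : ∀ n n', (T₁.Δ n).isSome → σ n = some n' → (T₂.Δ n').isSome
  st2 : ∀ (t₁ : BaseType) (π : Path), AEval T₁.Γ T₁.Δ π t₁ →
      ∃ t₂, VSub σ t₁ t₂ ∧ AEval T₂.Γ T₂.Δ π t₂
  st3 : ∀ n₂ ∈ T₂.Θ, ∃ n₁ ∈ T₁.Θ,
      ∀ n, ((T₁.Δ n).isSome ∧ σ n = some n₂) ↔ n = n₁

/-- The sub-typing relation T₁ ⊑ T₂. -/
def TySub (T₁ T₂ : Ty) : Prop := ∃ σ, SubtypeVia T₁ T₂ σ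

-- Successor base type of a policy node for field f: the node of the policy
-- governing f if f is deep, and ⊤ otherwise.
open Classical in
noncomputable def polEdge (τ : Pol) (f : Field) : BaseType :=
  if h : ∃ X, (X, f) ∈ τ then BaseType.node (h.choose + 1) else BaseType.top

/-- The graph part of Φ(τ): node 0 is the unfolded root n_τ, node X+1 is the
node n'_X of policy identifier X. -/
noncomputable def PhiGraph (Pm : PolId → Pol) (τ : Pol) : Graph :=
  fun n =>
    match n with
    | 0 => some (polEdge τ)
    | m + 1 => some (polEdge (Pm m))

/-- The root node n_τ of Φ(τ). -/
def PhiRoot : Node := 0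

/-- Heap update h[(l,f) ↦ v]. -/
def hupd (h : Heap) (l : Loc) (f : Field) (v : Val) : Heap :=
  fun l' => if l' = l then (h l).map (fun o => Function.update o f v) else h l'

/-- Graph update Δ[(n,f) ↦ t]. -/
def gupd (Δ : Graph) (n : Node) (f : Field) (t : BaseType) : Graph :=
  fun m => if m = n then (Δ n).map (fun e => Function.update e f t) else Δ m


/-! Induct along the fields of `π`, keeping a common prefix that evaluates to the current value in the
old heap and to the current base type in the old graph. A location typed by a node is `lx` exactly
when the node is `nx`: uniqueness for the strong node `nx` gives one direction, the path `x` itself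
the other. Hence the concrete and the abstract traversal take the updated edge together, and from
then on they are a path from `y`. A `⊤`-typed prefix forces `t = ⊤`, and from a `⊤out`-typed one no
location of `A`, in particular not `lx`, is reachable, so the heap update is invisible. -/

theorem Reach.trans {h : Heap} {a b c : Val} (hab : Reach h a b) (hbc : Reach h b c) :
    Reach h a c := by
  induction hbc with
  | refl => exact hab
  | step g _ ho ih => exact Reach.step g ih ho

@[simp]
theorem evalFields_nil (h : Heap) (w : Val) : evalFields h w [] = some w := by
  cases w <;> rfl

@[simp]
theorem aevalFields_nil (Δ : Graph) (s : BaseType) : aevalFields Δ s [] = some s := by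
  cases s <;> rfl

theorem evalFields_hupd_cons (h : Heap) (lx : Loc) (f : Field) (ly : Val) (l : Loc)
    (g : Field) (fs : List Field) :
    evalFields (hupd h lx f ly) (Val.loc l) (g :: fs) =
      (h l).bind fun o => evalFields (hupd h lx f ly) (if l = lx ∧ g = f then ly else o g) fs := by
  by_cases hl : l = lx
  · subst hl
    cases ho : h l with
    | none => simp [evalFields, hupd, ho]
    | some o => by_cases hg : g = f <;> simp [evalFields, hupd, ho, hg]
  · cases ho : h l <;> simp [evalFields, hupd, ho, hl]

theorem aevalFields_gupd_cons (Δ : Graph) (nx : Node) (f : Field) (ty : BaseType) (n : Node)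
    (g : Field) (fs : List Field) :
    aevalFields (gupd Δ nx f ty) (BaseType.node n) (g :: fs) =
      (Δ n).bind fun e =>
        aevalFields (gupd Δ nx f ty) (if n = nx ∧ g = f then ty else e g) fs := by
  by_cases hn : n = nx
  · subst hn
    cases he : Δ n with
    | none => simp [aevalFields, gupd, he]
    | some e => by_cases hg : g = f <;> simp [aevalFields, gupd, he, hg]
  · cases he : Δ n <;> simp [aevalFields, gupd, he, hn]

theorem evalFields_hupd_of_unreachable {h : Heap} {lx : Loc} {f : Field} {ly : Val}
    (fs : List Field) {w : Val} (hw : ∀ l, Reach h w (Val.loc l) → l ≠ lx) :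
    evalFields (hupd h lx f ly) w fs = evalFields h w fs := by
  induction fs generalizing w with
  | nil => cases w <;> rfl
  | cons g fs ih =>
    cases w with
    | null => rfl
    | loc l =>
      have hl : hupd h lx f ly l = h l := if_neg (hw l (Reach.refl _))
      cases ho : h l with
      | none => simp [evalFields, hl, ho]
      | some o =>
        simp only [evalFields, hl, ho]
        exact ih fun l' hr => hw l' ((Reach.step g (Reach.refl _) ho).trans hr)

theorem evalFields_append (h : Heap) (as bs : List Field) (w : Val) :
    evalFields h w (as ++ bs) = (evalFields h w as).bind fun u => evalFields h u bs := by
  induction as generalizing w with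
  | nil => cases w <;> rfl
  | cons a as ih =>
    cases w with
    | null => rfl
    | loc l => cases ho : h l <;> simp [evalFields, ho, ih]

theorem aevalFields_append (Δ : Graph) (as bs : List Field) (s : BaseType) :
    aevalFields Δ s (as ++ bs) = (aevalFields Δ s as).bind fun u => aevalFields Δ u bs := by
  induction as generalizing s with
  | nil => cases s <;> rfl
  | cons a as ih =>
    cases s with
    | node n => cases he : Δ n <;> simp [aevalFields, he, ih]
    | bot => rfl
    | top => cases bs <;> rfl
    | topOut => cases bs <;> rfl

theorem EvalPath.snoc {ρ : Env} {h : Heap} {π : Path} {l : Loc} {o : Obj}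
    (hπ : EvalPath ρ h π (Val.loc l)) (ho : h l = some o) (g : Field) :
    EvalPath ρ h ⟨π.root, π.fields ++ [g]⟩ (o g) := by
  unfold EvalPath at hπ ⊢
  rw [evalFields_append, hπ]
  simp [evalFields, ho]

theorem AEval.snoc {Γ : Var → BaseType} {Δ : Graph} {π : Path} {n : Node}
    {e : Field → BaseType} (hπ : AEval Γ Δ π (BaseType.node n)) (he : Δ n = some e)
    (g : Field) : AEval Γ Δ ⟨π.root, π.fields ++ [g]⟩ (e g) := by
  unfold AEval at hπ ⊢
  rw [aevalFields_append, hπ]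
  simp [aevalFields, he]

theorem Interp.loc_eq_iff_node_eq {ρ : Env} {h : Heap} {A : Set Loc} {Γ : Var → BaseType}
    {Δ : Graph} {Θ : Set Node} {x : Var} {lx : Loc} {nx : Node}
    (hint : Interp ρ h A ⟨Γ, Δ, Θ⟩) (hx : ρ x = Val.loc lx)
    (hΓx : Γ x = BaseType.node nx) (hstrong : nx ∈ Θ) {π : Path} {l : Loc} {n : Node}
    (hev : EvalPath ρ h π (Val.loc l)) (habs : AEval Γ Δ π (BaseType.node n)) :
    l = lx ↔ n = nx := by
  constructor
  · rintro rfl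
    cases hint.paths π _ _ habs hev with
    | node _ _ _ _ hall =>
      simpa [AEval, hΓx, eq_comm] using hall ⟨x, []⟩ (by simp [EvalPath, hx])
  · rintro rfl
    exact hint.strong n hstrong π ⟨x, []⟩ l lx habs (by simp [AEval, hΓx]) hev
      (by simp [EvalPath, hx])

theorem pathing_from_common_prefix {ρ : Env} {h : Heap} {A : Set Loc} {Γ : Var → BaseType}
    {Δ : Graph} {Θ : Set Node} {x y : Var} {lx : Loc} {ly : Val} {nx : Node} {ty : BaseType} {f : Field}
    (hint : Interp ρ h A ⟨Γ, Δ, Θ⟩) (hx : ρ x = Val.loc lx) (hxA : lx ∈ A)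
    (hΓx : Γ x = BaseType.node nx) (hstrong : nx ∈ Θ) (hy : ρ y = ly) (hΓy : Γ y = ty)
    {v : Val} {t : BaseType} (fs : List Field) {w : Val} {s : BaseType} {π₀ : Path}
    (hev : EvalPath ρ h π₀ w) (habs₀ : AEval Γ Δ π₀ s)
    (hconc : evalFields (hupd h lx f ly) w fs = some v)
    (habs : aevalFields (gupd Δ nx f ty) s fs = some t) :
    (evalFields h w fs = some v ∧ aevalFields Δ s fs = some t) ∨
    (∃ fs' : List Field, EvalPath ρ h ⟨y, fs'⟩ v ∧ AEval Γ Δ ⟨y, fs'⟩ t) ∨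
    t = BaseType.top ∨ v = Val.null := by
  induction fs generalizing w s π₀ with
  | nil => simp_all
  | cons g fs ih =>
    cases w with
    | null => simp [evalFields] at hconc
    | loc l =>
      cases s with
      | bot => simp [aevalFields] at habs
      | top => exact Or.inr (Or.inr (Or.inl (by simpa [aevalFields] using habs.symm)))
      | topOut =>
        cases hint.paths π₀ _ _ habs₀ hev with
        | topOut _ hunreach =>
          refine Or.inl ⟨?_, by simpa [aevalFields] using habs⟩
          rwa [← evalFields_hupd_of_unreachable _ fun l' hr hl' => hunreach l' hr (hl' ▸ hxA)]
      | node n =>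
        rw [evalFields_hupd_cons, Option.bind_eq_some_iff] at hconc
        rw [aevalFields_gupd_cons, Option.bind_eq_some_iff] at habs
        obtain ⟨o, ho, hconc⟩ := hconc
        obtain ⟨e, he, habs⟩ := habs
        simp only [hint.loc_eq_iff_node_eq hx hΓx hstrong hev habs₀] at hconc
        split_ifs at hconc habs
        · rcases ih (π₀ := ⟨y, []⟩) (by simp [EvalPath, hy]) (by simp [AEval, hΓy]) hconc habs
            with ⟨hconc_old, habs_old⟩ | hrest
          · exact Or.inr (Or.inl ⟨fs, by simpa [EvalPath, hy], by simpa [AEval, hΓy]⟩)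
          · exact Or.inr hrest
        · refine (ih (hev.snoc ho g) (habs₀.snoc he g) hconc habs).imp_left
            fun ⟨hconc_old, habs_old⟩ => ⟨?_, ?_⟩
          · simp [evalFields, ho, hconc_old]
          · simp [aevalFields, he, habs_old]

/-- Pathing through strong field assignment. -/
theorem pathing_strong_field_assignment
    (ρ : Env) (h : Heap) (A : Set Loc) (Γ : Var → BaseType) (Δ : Graph) (Θ : Set Node)
    (x y : Var) (lx : Loc) (ly : Val) (nx : Node) (ty : BaseType) (f : Field)
    (hint : Interp ρ h A ⟨Γ, Δ, Θ⟩)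
    (hx : ρ x = Val.loc lx) (hxA : lx ∈ A)
    (hΓx : Γ x = BaseType.node nx) (hstrong : nx ∈ Θ)
    (hy : ρ y = ly) (hΓy : Γ y = ty)
    (π : Path) (v : Val) (t : BaseType)
    (hconc : EvalPath ρ (hupd h lx f ly) π v)
    (habs : AEval Γ (gupd Δ nx f ty) π t) :
    (EvalPath ρ h π v ∧ AEval Γ Δ π t) ∨
    (∃ fs : List Field, EvalPath ρ h ⟨y, fs⟩ v ∧ AEval Γ Δ ⟨y, fs⟩ t) ∨
    t = BaseType.top ∨ v = Val.null :=
  pathing_from_common_prefix hint hx hxA hΓx hstrong hy hΓy π.fields (π₀ := ⟨π.root, []⟩)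
    (by simp [EvalPath]) (by simp [AEval]) hconc habs

end SecureClones
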